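/- arXiv:2107.00916 — 4 statements merged into one kernel-verified Lean document; each statement's English description precedes it below -/
import Mathlib

section
/- The fractional chromatic number of the square of the 8-cycle C_8^2 (the graph on vertices v_1,...,v_8 where v_i is adjacent to v_{i±1} and v_{i±2} mod 8) equals 4. -/
open SimpleGraph

/-- The fractional chromatic number, as the infimum of `a/b` over all `(a:b)`-colorings. -/
noncomputable def fracChrom {V : Type*} (G : SimpleGraph V) : ℝ :=
  sInf {r : ℝ | ∃ a b : ℕ, 0 < b ∧
    (∃ ψ : V → Finset (Fin a), (∀ v, b ≤ (ψ v).card) ∧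
      ∀ u v, G.Adj u v → Disjoint (ψ u) (ψ v)) ∧ r = a / b}

/-- The square of the 8-cycle. -/
def C8sq : SimpleGraph (ZMod 8) := SimpleGraph.circulantGraph ({1, 2} : Set (ZMod 8))

instance : DecidablePred (· ∈ ({1, 2} : Set (ZMod 8))) := fun x =>
  decidable_of_iff (x = 1 ∨ x = 2) (by simp)

instance : DecidableRel C8sq.Adj :=
  inferInstanceAs (DecidableRel (SimpleGraph.circulantGraph ({1, 2} : Set (ZMod 8))).Adj)

/-- The strong product of two simple graphs. -/
def strongProd {α β : Type*} (G : SimpleGraph α) (H : SimpleGraph β) :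
    SimpleGraph (α × β) where
  Adj x y := x ≠ y ∧ (x.1 = y.1 ∨ G.Adj x.1 y.1) ∧ (x.2 = y.2 ∨ H.Adj x.2 y.2)
  symm := ⟨fun x y h => ⟨h.1.symm, h.2.1.imp Eq.symm (fun a => G.adj_symm a),
    h.2.2.imp Eq.symm (fun a => H.adj_symm a)⟩⟩
  loopless := ⟨fun x h => h.1 rfl⟩

instance {α β : Type*} [DecidableEq α] [DecidableEq β] (G : SimpleGraph α) (H : SimpleGraph β)
    [DecidableRel G.Adj] [DecidableRel H.Adj] : DecidableRel (strongProd G H).Adj :=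
  fun x y => inferInstanceAs
    (Decidable (x ≠ y ∧ (x.1 = y.1 ∨ G.Adj x.1 y.1) ∧ (x.2 = y.2 ∨ H.Adj x.2 y.2)))

/-- The strong product `C₅ ⊠ K₂`. -/
def C5K2 : SimpleGraph (Fin 5 × Fin 2) :=
  strongProd (SimpleGraph.cycleGraph 5) (⊤ : SimpleGraph (Fin 2))

/-- The independence number of a graph. -/
noncomputable def indepNum {V : Type*} (G : SimpleGraph V) : ℕ :=
  sSup {n | ∃ s : Finset V, s.card = n ∧ ∀ u ∈ s, ∀ v ∈ s, ¬G.Adj u v}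


/-! Reducing the vertices of `C₈²` mod 4 is a proper 4-coloring, so `χ_f ≤ 4`. Conversely every
independent set of `C₈²` has at most 2 vertices, and in an `(a:b)`-coloring each of the `a` color
classes is independent while each of the 8 vertices lies in at least `b` of them, so `8b ≤ 2a`. -/

open Finset

variable {V : Type*} (G : SimpleGraph V)

def fracColoringRatios : Set ℝ :=
  {r : ℝ | ∃ a b : ℕ, 0 < b ∧
    (∃ ψ : V → Finset (Fin a), (∀ v, b ≤ (ψ v).card) ∧
      ∀ u v, G.Adj u v → Disjoint (ψ u) (ψ v)) ∧ r = a / b}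

lemma fracChrom_eq_sInf : fracChrom G = sInf (fracColoringRatios G) := rfl

lemma fracColoringRatios_bddBelow : BddBelow (fracColoringRatios G) :=
  ⟨0, by rintro r ⟨a, b, -, -, rfl⟩; positivity⟩

lemma natCast_mem_fracColoringRatios {n : ℕ} (C : G.Coloring (Fin n)) :
    (n : ℝ) ∈ fracColoringRatios G :=
  ⟨n, 1, one_pos, ⟨fun v => {C v}, fun v => by simp,
    fun _ _ h => disjoint_singleton.2 (C.valid h)⟩, by simp⟩

lemma fracChrom_le_of_coloring {n : ℕ} (C : G.Coloring (Fin n)) : fracChrom G ≤ n := by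
  rw [fracChrom_eq_sInf]
  exact csInf_le (fracColoringRatios_bddBelow G) (natCast_mem_fracColoringRatios G C)

variable {G} [Fintype V]

lemma card_mul_le_mul_of_forall_isIndepSet_card_le {α a b : ℕ}
    (hα : ∀ s : Finset V, G.IsIndepSet s → #s ≤ α) (ψ : V → Finset (Fin a))
    (hb : ∀ v, b ≤ #(ψ v)) (hψ : ∀ u v, G.Adj u v → Disjoint (ψ u) (ψ v)) :
    Fintype.card V * b ≤ a * α := by
  classical
  have hclass : ∀ c : Fin a, G.IsIndepSet (univ.bipartiteBelow (fun v c => c ∈ ψ v) c : Set V) :=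
    fun c u hu v hv _ huv => disjoint_left.1 (hψ u v huv) (by simpa using hu) (by simpa using hv)
  simpa using card_nsmul_le_card_nsmul (fun v c => c ∈ ψ v) (s := univ) (t := univ)
    (fun v _ => by simpa [bipartiteAbove] using hb v) (fun c _ => hα _ (hclass c))

lemma card_div_le_fracChrom {α : ℕ} (hα : ∀ s : Finset V, G.IsIndepSet s → #s ≤ α) :
    (Fintype.card V / α : ℝ) ≤ fracChrom G := by
  rw [fracChrom_eq_sInf]
  refine le_csInf ⟨_, natCast_mem_fracColoringRatios G G.colorable_of_fintype.some⟩ ?_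
  rintro r ⟨a, b, hb, ⟨ψ, hψb, hψ⟩, rfl⟩
  have key : (Fintype.card V * b : ℝ) ≤ a * α := by
    exact_mod_cast card_mul_le_mul_of_forall_isIndepSet_card_le hα ψ hψb hψ
  rcases α.eq_zero_or_pos with rfl | hα0
  · simp only [Nat.cast_zero, div_zero]; positivity
  · rw [div_le_div_iff₀ (by positivity) (by positivity)]
    linarith

set_option maxRecDepth 4000 in
lemma C8sq_isIndepSet_card_le_two (s : Finset (ZMod 8)) (hs : C8sq.IsIndepSet s) : #s ≤ 2 := by
  revert s
  decide

def C8sq.coloringMod4 : C8sq.Coloring (Fin 4) :=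
  Coloring.mk (fun v => Fin.ofNat 4 v.val) (by decide)

/-- The fractional chromatic number of `C₈²` equals 4. -/
theorem fracChrom_C8sq : fracChrom C8sq = 4 := by
  refine le_antisymm ?_ ?_
  · exact_mod_cast fracChrom_le_of_coloring C8sq C8sq.coloringMod4
  · calc (4 : ℝ) = Fintype.card (ZMod 8) / 2 := by norm_num
      _ ≤ fracChrom C8sq := card_div_le_fracChrom C8sq_isIndepSet_card_le_two
end

section
/- For a vertex-transitive finite graph G, the fractional chromatic number equals |V(G)|/α(G), where α(G) is the independence number. -/
open SimpleGraph

/-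
Counting incidences between vertices and colours, every colour class of an `(a:b)`-colouring is
independent, so `b·|V| ≤ a·α(G)`; this is the lower bound `|V|/α(G) ≤ χ_f(G)` for every finite
graph. For the upper bound, fix a maximum independent set `S` and use the automorphisms of `G` as
colours, giving `v` the colours `σ` with `v ∈ σ(S)`. Adjacent vertices share no colour because each
`σ(S)` is independent. Left multiplication by an automorphism `τ` maps the colours of `v` onto those
of `τ v`, so by vertex-transitivity every vertex receives the same number `b` of colours, and
double counting gives `|V|·b = |Aut G|·α(G)`.
-/

open Finset

theorem indepNum_eq_simpleGraph_indepNum {V : Type*} (G : SimpleGraph V) :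
    _root_.indepNum G = G.indepNum := by
  unfold _root_.indepNum SimpleGraph.indepNum
  congr 1
  ext n
  refine exists_congr fun s => ?_
  rw [isNIndepSet_iff, isIndepSet_iff, and_comm]
  refine and_congr_left' ⟨fun h u hu v hv _ => h u hu v hv, fun h u hu v hv huv => ?_⟩
  obtain rfl | hne := eq_or_ne u v
  · exact (G.loopless.irrefl u) huv
  · exact h hu hv hne huv

namespace SimpleGraph

variable {V : Type*} (G : SimpleGraph V)

instance [Finite V] : Finite (G ≃g G) :=
  Finite.of_injective _ RelIso.toEquiv_injective

theorem indepNum_pos [Finite V] [Nonempty V] : 0 < G.indepNum := by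
  obtain ⟨v⟩ := ‹Nonempty V›
  have h := (show G.IsIndepSet ({v} : Finset V) by simp).card_le_indepNum
  rwa [card_singleton] at h

theorem sum_card_le_card_mul_indepNum [Fintype V] {C : Type*} [Fintype C] (ψ : V → Finset C)
    (hψ : ∀ u v, G.Adj u v → Disjoint (ψ u) (ψ v)) :
    ∑ v, #(ψ v) ≤ Fintype.card C * G.indepNum := by
  classical
  have hclass (c : C) : G.IsIndepSet (univ.bipartiteBelow (fun v c => c ∈ ψ v) c) := by
    intro u hu v hv _ huv
    simp only [bipartiteBelow, coe_filter, mem_univ, true_and] at hu hv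
    exact Finset.disjoint_left.1 (hψ u v huv) hu hv
  calc ∑ v, #(ψ v) = ∑ v, #(univ.bipartiteAbove (fun v c => c ∈ ψ v) v) := by
        simp [bipartiteAbove]
    _ = ∑ c, #(univ.bipartiteBelow (fun v c => c ∈ ψ v) c) :=
        sum_card_bipartiteAbove_eq_sum_card_bipartiteBelow _
    _ ≤ ∑ _c : C, G.indepNum := sum_le_sum fun c _ => (hclass c).card_le_indepNum
    _ = Fintype.card C * G.indepNum := by simp

section autColoring

variable [DecidableEq V] [Fintype (G ≃g G)]

def autColoring (S : Finset V) (v : V) : Finset (G ≃g G) :=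
  {σ | σ⁻¹ v ∈ S}

variable {G}

theorem disjoint_autColoring {S : Finset V} (hS : G.IsIndepSet S) {u v : V} (huv : G.Adj u v) :
    Disjoint (G.autColoring S u) (G.autColoring S v) := by
  refine Finset.disjoint_left.2 fun σ hu hv => ?_
  simp only [autColoring, mem_filter, mem_univ, true_and] at hu hv
  have hadj : G.Adj (σ⁻¹ u) (σ⁻¹ v) := σ⁻¹.map_adj_iff.2 huv
  exact hS hu hv hadj.ne hadj

theorem card_autColoring_apply (S : Finset V) (τ : G ≃g G) (v : V) :
    #(G.autColoring S (τ v)) = #(G.autColoring S v) :=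
  card_equiv (Equiv.mulLeft τ⁻¹) fun σ => by simp [autColoring, mul_inv_rev, RelIso.mul_apply]

theorem sum_card_autColoring [Fintype V] (S : Finset V) :
    ∑ v, #(G.autColoring S v) = Fintype.card (G ≃g G) * #S := by
  have hcard (σ : G ≃g G) : #(univ.bipartiteBelow (fun v σ => σ⁻¹ v ∈ S) σ) = #S :=
    card_equiv σ⁻¹.toEquiv fun v => by simp [bipartiteBelow]
  calc ∑ v, #(G.autColoring S v)
        = ∑ σ : G ≃g G, #(univ.bipartiteBelow (fun v σ => σ⁻¹ v ∈ S) σ) :=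
        sum_card_bipartiteAbove_eq_sum_card_bipartiteBelow _
    _ = Fintype.card (G ≃g G) * #S := by simp [hcard]

end autColoring

end SimpleGraph

section fracChrom

variable {V : Type*} {G : SimpleGraph V}

theorem fracChrom_le_of_coloring_s1 {C : Type*} [Fintype C] {b : ℕ} (hb : 0 < b)
    (ψ : V → Finset C) (hcard : ∀ v, b ≤ #(ψ v))
    (hψ : ∀ u v, G.Adj u v → Disjoint (ψ u) (ψ v)) :
    fracChrom G ≤ Fintype.card C / b := by
  let e := (Fintype.equivFin C).toEmbedding
  refine csInf_le ⟨0, ?_⟩ ⟨Fintype.card C, b, hb,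
    ⟨fun v => (ψ v).map e, fun v => by simpa using hcard v, fun u v h => by simpa using hψ u v h⟩,
    rfl⟩
  rintro r ⟨a, c, -, -, rfl⟩
  positivity

theorem card_div_indepNum_le_fracChrom [Fintype V] [Nonempty V] :
    (Fintype.card V : ℝ) / _root_.indepNum G ≤ fracChrom G := by
  rw [indepNum_eq_simpleGraph_indepNum]
  refine le_csInf ⟨_, Fintype.card V, 1, one_pos,
    ⟨fun v => {Fintype.equivFin V v}, by simp, fun u v h => by simpa using h.ne⟩, rfl⟩ ?_
  rintro r ⟨a, b, hb, ⟨ψ, hcard, hψ⟩, rfl⟩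
  have hcount : Fintype.card V * b ≤ a * G.indepNum := calc
    Fintype.card V * b = ∑ _v : V, b := by simp
    _ ≤ ∑ v, #(ψ v) := sum_le_sum fun v _ => hcard v
    _ ≤ a * G.indepNum := by simpa using G.sum_card_le_card_mul_indepNum ψ hψ
  rw [div_le_div_iff₀ (by exact_mod_cast G.indepNum_pos) (by exact_mod_cast hb)]
  exact_mod_cast hcount

theorem fracChrom_le_card_div_indepNum [Fintype V] [Nonempty V]
    (ht : ∀ u v : V, ∃ φ : G ≃g G, φ u = v) :
    fracChrom G ≤ (Fintype.card V : ℝ) / _root_.indepNum G := by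
  classical
  have := Fintype.ofFinite (G ≃g G)
  obtain ⟨S, hS, hScard⟩ := G.exists_isNIndepSet_indepNum
  obtain ⟨v₀⟩ := ‹Nonempty V›
  set b := #(G.autColoring S v₀)
  have hb (v : V) : #(G.autColoring S v) = b := by
    obtain ⟨τ, rfl⟩ := ht v₀ v
    exact card_autColoring_apply S τ v₀
  have hcount : Fintype.card V * b = Fintype.card (G ≃g G) * G.indepNum := by
    rw [← hScard, ← sum_card_autColoring]
    simp [hb]
  have hbpos : 0 < b :=
    Nat.pos_of_mul_pos_left (hcount ▸ Nat.mul_pos Fintype.card_pos G.indepNum_pos)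
  calc fracChrom G ≤ Fintype.card (G ≃g G) / b :=
        fracChrom_le_of_coloring_s1 hbpos _ (fun v => (hb v).ge) fun _ _ => disjoint_autColoring hS
    _ = Fintype.card V / _root_.indepNum G := by
        rw [indepNum_eq_simpleGraph_indepNum, div_eq_div_iff (by positivity)
          (by exact_mod_cast G.indepNum_pos.ne')]
        exact_mod_cast hcount.symm

end fracChrom

/-- For a vertex-transitive finite graph, `χ_f(G) = |V(G)| / α(G)`. -/
theorem fracChrom_vertexTransitive {V : Type*} [Fintype V] [Nonempty V]
    (G : SimpleGraph V) (ht : ∀ u v : V, ∃ φ : G ≃g G, φ u = v) :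
    fracChrom G = (Fintype.card V : ℝ) / (_root_.indepNum G : ℝ) :=
  le_antisymm (fracChrom_le_card_div_indepNum ht) card_div_indepNum_le_fracChrom
end

section
/- The graph C_5 ⊠ K_3 has maximum degree 8, clique number 6, and chromatic number 8. -/
open SimpleGraph

/-- The strong product `C₅ ⊠ K₃`. -/
def C5K3 : SimpleGraph (Fin 5 × Fin 3) :=
  strongProd (SimpleGraph.cycleGraph 5) (⊤ : SimpleGraph (Fin 3))


instance : DecidableRel C5K3.Adj :=
  inferInstanceAs
    (DecidableRel (strongProd (SimpleGraph.cycleGraph 5) (⊤ : SimpleGraph (Fin 3))).Adj)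

/-!
The closed neighbourhood of `(a, b)` in `G ⊠ H` is the product of the closed neighbourhoods of `a`
and `b`, so `C₅ ⊠ K₃` is `3 · 3 - 1 = 8`-regular. Both coordinate projections of a clique of
`G ⊠ H` are cliques, and products of cliques are cliques, so `ω(G ⊠ H) = ω(G) ω(H)`, which is
`2 · 3 = 6` here. An independent set of `G ⊠ Kₙ` projects injectively onto an independent set
of `G`, so `C₅ ⊠ K₃` has no independent set of size `3`; every colour class of a colouring has
at most two of the `15` vertices, forcing at least `8` colours, and `8` suffice.
-/

open Finset

namespace SimpleGraph

variable {α β : Type*} {G : SimpleGraph α} {H : SimpleGraph β}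

@[simp] lemma strongProd_adj {x y : α × β} :
    (strongProd G H).Adj x y ↔
      x ≠ y ∧ (x.1 = y.1 ∨ G.Adj x.1 y.1) ∧ (x.2 = y.2 ∨ H.Adj x.2 y.2) :=
  Iff.rfl

section Degree

variable [Fintype α] [Fintype β] [DecidableEq α] [DecidableEq β]
  [DecidableRel G.Adj] [DecidableRel H.Adj]

lemma neighborFinset_strongProd (a : α) (b : β) :
    (strongProd G H).neighborFinset (a, b) =
      (insert a (G.neighborFinset a) ×ˢ insert b (H.neighborFinset b)).erase (a, b) := by
  ext ⟨x, y⟩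
  simp only [mem_neighborFinset, strongProd_adj, mem_erase, mem_product, mem_insert]
  grind

lemma degree_strongProd (a : α) (b : β) :
    (strongProd G H).degree (a, b) = (G.degree a + 1) * (H.degree b + 1) - 1 := by
  rw [← card_neighborFinset_eq_degree, neighborFinset_strongProd, card_erase_of_mem (by simp),
    card_product, card_insert_of_notMem (by simp), card_insert_of_notMem (by simp),
    card_neighborFinset_eq_degree, card_neighborFinset_eq_degree]

lemma IsRegularOfDegree.strongProd {d e : ℕ} (hG : G.IsRegularOfDegree d)
    (hH : H.IsRegularOfDegree e) :
    (strongProd G H).IsRegularOfDegree ((d + 1) * (e + 1) - 1) := by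
  rintro ⟨a, b⟩
  rw [degree_strongProd, hG.degree_eq, hH.degree_eq]

end Degree

lemma cycleGraph_isRegularOfDegree (n : ℕ) : (cycleGraph (n + 3)).IsRegularOfDegree 2 :=
  fun _ ↦ cycleGraph_degree_three_le

lemma IsClique.eq_or_adj {s : Set α} (hs : G.IsClique s) {a b : α} (ha : a ∈ s) (hb : b ∈ s) :
    a = b ∨ G.Adj a b :=
  or_iff_not_imp_left.2 (hs ha hb)

lemma IsClique.prod_strongProd {s : Set α} {t : Set β} (hs : G.IsClique s) (ht : H.IsClique t) :
    (strongProd G H).IsClique (s ×ˢ t) :=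
  fun _ hx _ hy hne ↦ ⟨hne, hs.eq_or_adj hx.1 hy.1, ht.eq_or_adj hx.2 hy.2⟩

lemma IsClique.image_fst_strongProd {s : Set (α × β)} (hs : (strongProd G H).IsClique s) :
    G.IsClique (Prod.fst '' s) := by
  rintro _ ⟨x, hx, rfl⟩ _ ⟨y, hy, rfl⟩ hne
  exact (hs hx hy (ne_of_apply_ne _ hne)).2.1.resolve_left hne

lemma IsClique.image_snd_strongProd {s : Set (α × β)} (hs : (strongProd G H).IsClique s) :
    H.IsClique (Prod.snd '' s) := by
  rintro _ ⟨x, hx, rfl⟩ _ ⟨y, hy, rfl⟩ hne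
  exact (hs hx hy (ne_of_apply_ne _ hne)).2.2.resolve_left hne

lemma cliqueNum_strongProd [Finite α] [Finite β] :
    (strongProd G H).cliqueNum = G.cliqueNum * H.cliqueNum := by
  classical
  apply le_antisymm
  · obtain ⟨s, hs⟩ := (strongProd G H).exists_isNClique_cliqueNum
    have hfst : G.IsClique (s.image Prod.fst : Set α) := by
      simpa using hs.isClique.image_fst_strongProd
    have hsnd : H.IsClique (s.image Prod.snd : Set β) := by
      simpa using hs.isClique.image_snd_strongProd
    calc (strongProd G H).cliqueNum = #s := hs.card_eq.symm
      _ ≤ #(s.image Prod.fst ×ˢ s.image Prod.snd) :=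
        card_le_card fun x hx ↦ mem_product.2 ⟨mem_image_of_mem _ hx, mem_image_of_mem _ hx⟩
      _ = #(s.image Prod.fst) * #(s.image Prod.snd) := card_product _ _
      _ ≤ G.cliqueNum * H.cliqueNum :=
        Nat.mul_le_mul (IsClique.card_le_cliqueNum (tc := hfst))
          (IsClique.card_le_cliqueNum (tc := hsnd))
  · obtain ⟨s, hs⟩ := G.exists_isNClique_cliqueNum
    obtain ⟨t, ht⟩ := H.exists_isNClique_cliqueNum
    have hst : (strongProd G H).IsClique (s ×ˢ t : Finset (α × β)) := by
      rw [coe_product]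
      exact hs.isClique.prod_strongProd ht.isClique
    rw [← hs.card_eq, ← ht.card_eq, ← card_product]
    exact IsClique.card_le_cliqueNum (tc := hst)

lemma cliqueNum_eq_of_isNClique [Finite α] {n : ℕ} {s : Finset α} (hs : G.IsNClique n s)
    (hfree : G.CliqueFree (n + 1)) : G.cliqueNum = n := by
  obtain ⟨t, ht⟩ := G.exists_isNClique_cliqueNum
  refine le_antisymm ?_ (hs.card_eq ▸ IsClique.card_le_cliqueNum (tc := hs.isClique))
  by_contra! hlt
  exact hfree.mono hlt t ht

lemma cliqueNum_top [Fintype α] : (⊤ : SimpleGraph α).cliqueNum = Fintype.card α :=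
  cliqueNum_eq_of_isNClique (s := univ) ⟨by simp, card_univ⟩ (cliqueFree_of_card_lt (by omega))

lemma cliqueNum_cycleGraph_five : (cycleGraph 5).cliqueNum = 2 :=
  cliqueNum_eq_of_isNClique (s := {0, 1}) (by decide) (by unfold CliqueFree; decide)

lemma IndepSetFree.card_le {n : ℕ} (h : G.IndepSetFree (n + 1)) {s : Finset α}
    (hs : G.IsIndepSet s) : #s ≤ n := by
  by_contra! hn
  obtain ⟨t, hts, ht⟩ := exists_subset_card_eq (Nat.succ_le_of_lt hn)
  exact h t ⟨hs.mono (by simpa using hts), ht⟩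

lemma card_le_mul_of_indepSetFree_of_colorable [Fintype α] {n k : ℕ}
    (h : G.IndepSetFree (n + 1)) (hk : G.Colorable k) : Fintype.card α ≤ k * n := by
  classical
  obtain ⟨C⟩ := hk
  have hfiber (c : Fin k) : #{v | C v = c} ≤ n :=
    h.card_le <| (C.isIndepSet_colorClass c).mono fun v hv ↦ by
      simpa [Coloring.colorClass] using hv
  calc Fintype.card α = #(univ : Finset α) := card_univ.symm
    _ ≤ n * #(univ.image C) := card_le_mul_card_image _ _ fun c _ ↦ hfiber c
    _ ≤ n * k := Nat.mul_le_mul_left _ ((card_le_univ _).trans_eq (Fintype.card_fin k))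
    _ = k * n := Nat.mul_comm n k

lemma IndepSetFree.strongProd_top {n : ℕ} (h : G.IndepSetFree n) :
    (strongProd G (⊤ : SimpleGraph β)).IndepSetFree n := by
  classical
  rintro t ⟨ht, rfl⟩
  have hinj : Set.InjOn Prod.fst (t : Set (α × β)) := fun x hx y hy hxy ↦
    not_not.1 fun hne ↦ ht hx hy hne ⟨hne, Or.inl hxy, eq_or_ne _ _⟩
  refine h (t.image Prod.fst) ⟨?_, card_image_of_injOn hinj⟩
  simp only [coe_image]
  rintro _ ⟨x, hx, rfl⟩ _ ⟨y, hy, rfl⟩ hne hadj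
  exact ht hx hy (ne_of_apply_ne _ hne) ⟨ne_of_apply_ne _ hne, Or.inr hadj, eq_or_ne _ _⟩

lemma cycleGraph_five_indepSetFree_three : (cycleGraph 5).IndepSetFree 3 := by
  unfold IndepSetFree
  decide

end SimpleGraph

def C5K3.coloring : C5K3.Coloring (Fin 8) :=
  Coloring.mk (fun v ↦ ![![0, 1, 2], ![3, 4, 6], ![0, 1, 5], ![2, 3, 4], ![5, 6, 7]] v.1 v.2)
    fun {u v} ↦ by revert u v; decide

/-- `C₅ ⊠ K₃` has maximum degree 8, clique number 6, and chromatic number 8. -/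
theorem C5K3_properties :
    C5K3.maxDegree = 8 ∧ C5K3.cliqueNum = 6 ∧ C5K3.chromaticNumber = 8 := by
  refine ⟨?_, ?_, ?_⟩
  · exact ((cycleGraph_isRegularOfDegree 2).strongProd IsRegularOfDegree.top).maxDegree_eq
  · rw [C5K3, cliqueNum_strongProd, cliqueNum_cycleGraph_five, cliqueNum_top, Fintype.card_fin]
  · rw [show (8 : ℕ∞) = (7 : ℕ) + 1 from rfl, chromaticNumber_eq_iff_colorable_not_colorable]
    refine ⟨C5K3.coloring.colorable, fun h7 ↦ ?_⟩
    have hcard := card_le_mul_of_indepSetFree_of_colorable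
      cycleGraph_five_indepSetFree_three.strongProd_top h7
    simp at hcard
end

section
/- Let G be a graph with maximum degree at most 4, let uvw be a triangle in G where d(u) = d(v) = 3, let u' be the third neighbor of u and v' the third neighbor of v (u', v' outside the triangle). Suppose ψ is an assignment of subsets of {1,...,M} to the vertices of G' = G − {u,v,w} such that adjacent vertices of G' receive disjoint sets, |ψ(y)| ≥ (12 − d_{G'}(y))M/31 for all y in G', and |ψ(u') ∖ ψ(v')| ≥ (8 − d(w))M/31. Then ψ can be extended to color w, v, u with sets of sizes (12−d(w))M/31, 9M/31, 9M/31 respectively, keeping adjacent vertices' sets disjoint (here the sets assigned to u', v', and the other neighbors of w are first shrunk to sizes (12 − d_G(·))M/31). -/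
open SimpleGraph

/-!
Write `M = 31 m`. Shrink `ψ u'` to `S_{u'}` keeping as much of `ψ u' \ ψ v'` as possible, then
`ψ v'` to `S_{v'}` avoiding `S_{u'}` as much as possible: the hypothesis on `|ψ u' \ ψ v'|` makes
`I = S_{u'} ∩ S_{v'}` small, and smaller still if `w` is adjacent to `u'` or `v'`. Otherwise the
remaining neighbours of `w` are shrunk one after another, each avoiding as much as it can of the
part of `I` not yet covered; each can spare `m` colours for this, thanks to its neighbour `w`.
With `F` the union of their sets, `w` takes a set outside `F` containing `I \ F`. Finally `u` and
`v` need disjoint sets of size `9 m` in the complements of `S_w ∪ S_{u'}` and `S_w ∪ S_{v'}`; these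
exist because the union of the two complements is the complement of
`S_w ∪ I ⊆ S_w ∪ (I ∩ F)`, which has at least `18 m` elements.
-/

open Finset Function

namespace Finset

variable {α : Type*}

theorem exists_subsets_card_eq_update {ι : Type*} [DecidableEq ι] {s : Set ι} {A : ι → Finset α}
    {n : ι → ℕ} (hn : ∀ i ∈ s, n i ≤ #(A i)) {i j : ι} (hij : i ≠ j) {Si Sj : Finset α}
    (hSi : Si ⊆ A i) (hSic : #Si = n i) (hSj : Sj ⊆ A j) (hSjc : #Sj = n j) :
    ∃ S : ι → Finset α, (∀ k ∈ s, S k ⊆ A k ∧ #(S k) = n k) ∧ S i = Si ∧ S j = Sj := by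
  choose! S hSA hSc using fun k (hk : k ∈ s) => exists_subset_card_eq (hn k hk)
  refine ⟨update (update S i Si) j Sj, fun k hk => ?_, by rw [update_of_ne hij, update_self],
    update_self _ _ _⟩
  rw [update_apply, update_apply]
  split_ifs with hkj hki
  · exact hkj ▸ ⟨hSj, hSjc⟩
  · exact hki ▸ ⟨hSi, hSic⟩
  · exact ⟨hSA k hk, hSc k hk⟩

variable [DecidableEq α]

theorem exists_subset_card_eq_card_inter_le (A P : Finset α) {n : ℕ} (hn : n ≤ #A) :
    ∃ S ⊆ A, #S = n ∧ #(S ∩ P) ≤ n - #(A \ P) := by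
  rcases le_total n #(A \ P) with h | h
  · obtain ⟨S, hS, rfl⟩ := exists_subset_card_eq h
    refine ⟨S, hS.trans sdiff_subset, rfl, ?_⟩
    rw [disjoint_iff_inter_eq_empty.mp (disjoint_of_subset_left hS sdiff_disjoint), card_empty]
    exact Nat.zero_le _
  · obtain ⟨S, hAPS, hSA, rfl⟩ := exists_subsuperset_card_eq sdiff_subset h hn
    have : #(A \ P) ≤ #(S \ P) := card_le_card (subset_sdiff.mpr ⟨hAPS, sdiff_disjoint⟩)
    exact ⟨S, hSA, rfl, by have := card_inter_add_card_sdiff S P; omega⟩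

theorem exists_disjoint_subsets_card_eq {X Y : Finset α} {a b : ℕ} (ha : a ≤ #X) (hb : b ≤ #Y)
    (hab : a + b ≤ #(X ∪ Y)) : ∃ A ⊆ X, ∃ B ⊆ Y, Disjoint A B ∧ #A = a ∧ #B = b := by
  obtain ⟨B, hBY, rfl, hBX⟩ := exists_subset_card_eq_card_inter_le Y X hb
  have : a ≤ #(X \ B) := by
    have := card_sdiff_add_card Y X
    have := card_sdiff_add_card_inter X B
    rw [inter_comm] at this
    rw [union_comm] at hab
    omega
  obtain ⟨A, hA, rfl⟩ := exists_subset_card_eq this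
  exact ⟨A, hA.trans sdiff_subset, B, hBY, disjoint_of_subset_left hA sdiff_disjoint, rfl, rfl⟩

theorem exists_subset_card_eq_card_inter_union_le (P U A : Finset α) {n m : ℕ}
    (h : n + m ≤ #A) : ∃ T ⊆ A, #T = n ∧ #(P ∩ (T ∪ U)) ≤ max #(P ∩ U) (#P - m) := by
  obtain ⟨T, hTA, rfl, hT⟩ := exists_subset_card_eq_card_inter_le A (P \ U) (n := n) (by omega)
  refine ⟨T, hTA, rfl, ?_⟩
  have hsplit : P ∩ (T ∪ U) ⊆ T ∩ (P \ U) ∪ P ∩ U := by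
    intro x; simp only [mem_inter, mem_union, mem_sdiff]; tauto
  have := (card_le_card hsplit).trans (card_union_le _ _)
  have := card_le_card_sdiff_add_card (s := A) (t := P \ U)
  have := card_sdiff_add_card_inter P U
  omega

theorem exists_subsets_card_eq_card_inter_biUnion_le {ι : Type*} [DecidableEq ι]
    (P : Finset α) (A S₀ : ι → Finset α) (n : ι → ℕ) {m : ℕ} (Z : Finset ι)
    (hA : ∀ z ∈ Z, n z + m ≤ #(A z)) :
    ∃ S : ι → Finset α, (∀ z ∈ Z, S z ⊆ A z ∧ #(S z) = n z) ∧ (∀ z ∉ Z, S z = S₀ z) ∧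
      (Z.Nonempty → #(P ∩ Z.biUnion S) ≤ #P - m) := by
  induction Z using Finset.induction_on with
  | empty => exact ⟨S₀, by simp, fun _ _ => rfl, by simp⟩
  | insert a Z ha ih =>
    obtain ⟨S, hSA, hS₀, hPS⟩ := ih fun z hz => hA z (mem_insert_of_mem hz)
    obtain ⟨T, hTA, hT, hPT⟩ :=
      exists_subset_card_eq_card_inter_union_le P (Z.biUnion S) (A a) (hA a (mem_insert_self a Z))
    have hS : ∀ z ∈ Z, update S a T z = S z := fun z hz =>
      update_of_ne (ne_of_mem_of_not_mem hz ha) _ _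
    refine ⟨update S a T, ?_, ?_, fun _ => ?_⟩
    · intro z hz
      rcases mem_insert.mp hz with rfl | hz
      · rw [update_self]; exact ⟨hTA, hT⟩
      · rw [hS z hz]; exact hSA z hz
    · intro z hz
      rw [mem_insert, not_or] at hz
      rw [update_of_ne hz.1, hS₀ z hz.2]
    · rw [biUnion_insert, update_self, biUnion_congr rfl hS]
      refine hPT.trans (max_le ?_ le_rfl)
      rcases Z.eq_empty_or_nonempty with rfl | hZ
      · simp
      · exact hPS hZ

theorem exists_subsets_card_eq_card_inter_le (A B : Finset α) {a b : ℕ} (ha : a ≤ #A)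
    (hb : b ≤ #B) : ∃ S ⊆ A, ∃ T ⊆ B, #S = a ∧ #T = b ∧ #(S ∩ T) ≤ a + b - (#(A \ B) + #B) := by
  obtain ⟨S, hSA, rfl, hSB⟩ := exists_subset_card_eq_card_inter_le A B ha
  obtain ⟨T, hTB, rfl, hTS⟩ := exists_subset_card_eq_card_inter_le B S hb
  have := card_sdiff_add_card_inter B S
  rw [inter_comm B] at this
  rw [inter_comm] at hTS
  exact ⟨S, hSA, T, hTB, rfl, rfl, by omega⟩

theorem exists_triangle_colours_of_card_le [Fintype α] (Su Sv F : Finset α) {k a b : ℕ}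
    (hF : #F + k ≤ Fintype.card α) (hk : #((Su ∩ Sv) \ F) ≤ k)
    (hu : #Su + k + a ≤ Fintype.card α) (hv : #Sv + k + b ≤ Fintype.card α)
    (huv : k + #(Su ∩ Sv ∩ F) + a + b ≤ Fintype.card α) :
    ∃ Sw Au Av : Finset α, #Sw = k ∧ #Au = a ∧ #Av = b ∧ Disjoint Sw F ∧
      Disjoint Au Av ∧ Disjoint Au Sw ∧ Disjoint Av Sw ∧ Disjoint Au Su ∧ Disjoint Av Sv := by
  obtain ⟨Sw, hISw, hSwF, rfl⟩ := exists_subsuperset_card_eq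
    (fun x hx => mem_compl.mpr (mem_sdiff.mp hx).2) hk (by rw [card_compl]; omega)
  have hI : Sw ∪ Su ∩ Sv ⊆ Sw ∪ Su ∩ Sv ∩ F := by
    intro x hx
    have := @hISw x
    simp only [mem_union, mem_inter, mem_sdiff] at hx this ⊢
    tauto
  obtain ⟨Au, hAu, Av, hAv, hAuAv, rfl, rfl⟩ :=
    exists_disjoint_subsets_card_eq (X := (Sw ∪ Su)ᶜ) (Y := (Sw ∪ Sv)ᶜ) (a := a) (b := b)
      (by rw [card_compl]; have := card_union_le Sw Su; omega)
      (by rw [card_compl]; have := card_union_le Sw Sv; omega)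
      (by rw [← compl_inter, ← union_inter_distrib_left, card_compl]
          have := (card_le_card hI).trans (card_union_le _ _); omega)
  rw [subset_compl_iff_disjoint_right, disjoint_union_right] at hAu hAv
  exact ⟨Sw, Au, Av, rfl, rfl, rfl, subset_compl_iff_disjoint_right.mp hSwF, hAuAv,
    hAu.1, hAv.1, hAu.2, hAv.2⟩

end Finset

namespace SimpleGraph

variable {V : Type*} [DecidableEq V] (G : SimpleGraph V)

theorem pairwise_disjoint_insert_update {β : Type*} [PartialOrder β] [OrderBot β] {c : V → β}
    {s : Set V} {x : V} {b : β} (hx : x ∉ s)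
    (hc : s.Pairwise fun y z => G.Adj y z → Disjoint (c y) (c z))
    (hb : ∀ z ∈ s, G.Adj x z → Disjoint b (c z)) :
    (insert x s).Pairwise fun y z => G.Adj y z → Disjoint (update c x b y) (update c x b z) := by
  have hs : ∀ z ∈ s, update c x b z = c z := fun z hz =>
    update_of_ne (ne_of_mem_of_not_mem hz hx) _ _
  refine (Set.pairwise_insert_of_notMem hx).mpr ⟨fun y hy z hz hyz hadj => ?_, fun z hz => ?_⟩
  · rw [hs y hy, hs z hz]; exact hc hy hz hyz hadj
  · rw [update_self, hs z hz]
    exact ⟨hb z hz, fun h => (hb z hz h.symm).symm⟩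

variable [Fintype V] [DecidableRel G.Adj]

theorem notMem_of_neighborFinset_eq_of_degree_eq_three {x a b c : V}
    (hx : G.neighborFinset x = {a, b, c}) (hd : G.degree x = 3) : c ∉ ({x, a, b} : Set V) := by
  have hc : G.Adj x c := by simp [← mem_neighborFinset, hx]
  rw [← card_neighborFinset_eq_degree, hx] at hd
  simp only [Set.mem_insert_iff, Set.mem_singleton_iff, not_or]
  refine ⟨hc.ne', fun h => ?_, fun h => ?_⟩ <;> subst h <;> simp at hd <;>
    exact absurd hd (card_le_two.trans_lt (by norm_num)).ne

theorem sub_degree_mul_add_card_mul_le {T s : Finset V} {y : V} {c : ℕ} (hy : G.degree y ≤ c)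
    (hs : s ⊆ G.neighborFinset y ∩ T) (m : ℕ) :
    (c - G.degree y) * m + #s * m ≤ (c - #(G.neighborFinset y \ T)) * m := by
  rw [← add_mul]
  refine Nat.mul_le_mul_right m ?_
  have := card_le_card hs
  have := card_sdiff_add_card_inter (G.neighborFinset y) T
  rw [card_neighborFinset_eq_degree] at this
  omega

variable {G}

theorem card_neighborFinset_sdiff_pair_add_two {u v w : V} (hu : G.Adj u w) (hv : G.Adj v w)
    (huv : u ≠ v) : #(G.neighborFinset w \ {u, v}) + 2 = G.degree w := by
  rw [← card_pair huv, card_sdiff_add_card_eq_card (by simp [insert_subset_iff, hu.symm, hv.symm]),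
    card_neighborFinset_eq_degree]

theorem adj_and_notMem_of_mem_neighborFinset_sdiff {u v w z : V}
    (hz : z ∈ G.neighborFinset w \ {u, v}) : G.Adj z w ∧ z ∉ ({u, v, w} : Set V) := by
  simp only [mem_sdiff, mem_neighborFinset, mem_insert, mem_singleton, not_or] at hz
  exact ⟨hz.1.symm, by simp [hz.2.1, hz.2.2, hz.1.ne']⟩

end SimpleGraph

section Triangle

variable {V α : Type*} [Fintype V] [DecidableEq V]

/-- `|ψ y| ≥ (12 - d_{G - uvw}(y)) m`, read as: besides the `(12 - d(y)) m` colours that `y`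
keeps, `ψ y` has `m` spare colours for each neighbour of `y` in the triangle `uvw`. -/
def HasSpareColours (G : SimpleGraph V) [DecidableRel G.Adj] (u v w : V) (m : ℕ)
    (ψ : V → Finset α) : Prop :=
  ∀ y ∉ ({u, v, w} : Set V), ∀ s ⊆ G.neighborFinset y ∩ {u, v, w},
    (12 - G.degree y) * m + #s * m ≤ #(ψ y) ∧ (12 - G.degree y) * m + #s * m ≤ 12 * m

variable {G : SimpleGraph V} [DecidableRel G.Adj] {u v w u' v' : V} {m : ℕ} {ψ : V → Finset α}

theorem hasSpareColours_of_le_card (hdeg : ∀ z, G.degree z ≤ 12)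
    (hψ : ∀ y ∉ ({u, v, w} : Set V), (12 - #(G.neighborFinset y \ {u, v, w})) * m ≤ #(ψ y)) :
    HasSpareColours G u v w m ψ := fun y hy s hs => by
  have h := G.sub_degree_mul_add_card_mul_le (hdeg y) hs m
  exact ⟨h.trans (hψ y hy), h.trans (Nat.mul_le_mul_right m (Nat.sub_le _ _))⟩

variable [DecidableEq α]

theorem exists_shrinking_pair (hψ : HasSpareColours G u v w m ψ) (hdeg : G.degree w ≤ 4)
    (huw : G.Adj u w) (hvw : G.Adj v w) (huu' : G.Adj u u') (hvv' : G.Adj v v')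
    (hu'T : u' ∉ ({u, v, w} : Set V)) (hv'T : v' ∉ ({u, v, w} : Set V))
    (hkey : (8 - G.degree w) * m ≤ #(ψ u' \ ψ v')) :
    ∃ Su ⊆ ψ u', ∃ Sv ⊆ ψ v', #Su = (12 - G.degree u') * m ∧ #Sv = (12 - G.degree v') * m ∧
      #(Su ∩ Sv) + (12 - G.degree w) * m ≤ 14 * m ∧
      (G.Adj u' w ∨ G.Adj v' w → #(Su ∩ Sv) + (12 - G.degree w) * m ≤ 13 * m) := by
  have hk : (8 - G.degree w) * m + 4 * m = (12 - G.degree w) * m := by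
    rw [← add_mul]; congr 1; omega
  have hk12 : (12 - G.degree w) * m ≤ 12 * m := Nat.mul_le_mul_right m (Nat.sub_le 12 _)
  obtain ⟨Su, hSu, Sv, hSv, hSuc, hSvc, hI⟩ := exists_subsets_card_eq_card_inter_le (ψ u') (ψ v')
    (by simpa using (hψ u' hu'T ∅ (empty_subset _)).1)
    (by simpa using (hψ v' hv'T ∅ (empty_subset _)).1)
  have hu := hψ u' hu'T {u} (by simp [huu'.symm])
  have hv := hψ v' hv'T {v} (by simp [hvv'.symm])
  simp only [card_singleton, one_mul] at hu hv
  refine ⟨Su, hSu, Sv, hSv, hSuc, hSvc, by omega, ?_⟩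
  rintro (hw | hw)
  · have := hψ u' hu'T {u, w} (by simp [insert_subset_iff, huu'.symm, hw])
    rw [card_pair huw.ne] at this
    omega
  · have := hψ v' hv'T {v, w} (by simp [insert_subset_iff, hvv'.symm, hw])
    rw [card_pair hvw.ne] at this
    omega

theorem exists_shrinking_avoiding (hψ : HasSpareColours G u v w m ψ) (hu'v' : u' ≠ v')
    {Su Sv : Finset α} (hSu : Su ⊆ ψ u') (hSuc : #Su = (12 - G.degree u') * m)
    (hSv : Sv ⊆ ψ v') (hSvc : #Sv = (12 - G.degree v') * m) :
    ∃ g : V → Finset α,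
      (∀ y ∉ ({u, v, w} : Set V), g y ⊆ ψ y ∧ #(g y) = (12 - G.degree y) * m) ∧
      g u' = Su ∧ g v' = Sv ∧ (((G.neighborFinset w \ {u, v}) \ {u', v'}).Nonempty →
        #(Su ∩ Sv ∩ ((G.neighborFinset w \ {u, v}) \ {u', v'}).biUnion g) ≤ #(Su ∩ Sv) - m) := by
  obtain ⟨g₀, hg₀, hg₀u', hg₀v'⟩ := exists_subsets_card_eq_update
    (fun y hy => by simpa using (hψ y hy ∅ (empty_subset _)).1) hu'v' hSu hSuc hSv hSvc
  obtain ⟨g, hgZ, hgg₀, hPg⟩ := exists_subsets_card_eq_card_inter_biUnion_le (Su ∩ Sv) ψ g₀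
    (fun y => (12 - G.degree y) * m) ((G.neighborFinset w \ {u, v}) \ {u', v'}) fun z hz => by
      obtain ⟨hzw, hzT⟩ := adj_and_notMem_of_mem_neighborFinset_sdiff (mem_sdiff.mp hz).1
      simpa using (hψ z hzT {w} (by simp [hzw])).1
  refine ⟨g, fun y hy => ?_, by rw [hgg₀ u' (by simp), hg₀u'], by rw [hgg₀ v' (by simp), hg₀v'],
    hPg⟩
  by_cases hyZ : y ∈ (G.neighborFinset w \ {u, v}) \ {u', v'}
  · exact hgZ y hyZ
  · rw [hgg₀ y hyZ]; exact hg₀ y hy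

theorem card_biUnion_neighborFinset_sdiff_add_le (hψ : HasSpareColours G u v w m ψ)
    (hdeg : G.degree w ≤ 4) (huv : G.Adj u v) (huw : G.Adj u w) (hvw : G.Adj v w)
    {g : V → Finset α}
    (hg : ∀ y ∉ ({u, v, w} : Set V), g y ⊆ ψ y ∧ #(g y) = (12 - G.degree y) * m) :
    #((G.neighborFinset w \ {u, v}).biUnion g) + (12 - G.degree w) * m ≤ 31 * m := by
  have hF := card_biUnion_le_card_mul (G.neighborFinset w \ {u, v}) g (11 * m) fun z hz => by
    obtain ⟨hzw, hzT⟩ := adj_and_notMem_of_mem_neighborFinset_sdiff hz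
    have hz := hψ z hzT {w} (by simp [hzw])
    rw [card_singleton, one_mul] at hz
    rw [(hg z hzT).2]
    omega
  have hNw := card_neighborFinset_sdiff_pair_add_two huw hvw huv.ne
  have : #(G.neighborFinset w \ {u, v}) * (11 * m) + (12 - G.degree w) * m ≤ 31 * m := by
    rw [← mul_assoc, ← add_mul]; exact Nat.mul_le_mul_right m (by omega)
  omega

theorem exists_shrinking (hψ : HasSpareColours G u v w m ψ) (hdeg : ∀ z, G.degree z ≤ 4)
    (hm : 0 < m) (huv : G.Adj u v) (huw : G.Adj u w) (hvw : G.Adj v w) (huu' : G.Adj u u')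
    (hvv' : G.Adj v v') (hu'T : u' ∉ ({u, v, w} : Set V)) (hv'T : v' ∉ ({u, v, w} : Set V))
    (hkey : (8 - G.degree w) * m ≤ #(ψ u' \ ψ v')) :
    ∃ g : V → Finset α, (∀ y ∉ ({u, v, w} : Set V), g y ⊆ ψ y ∧ #(g y) = (12 - G.degree y) * m) ∧
      #((G.neighborFinset w \ {u, v}).biUnion g) + (12 - G.degree w) * m ≤ 31 * m ∧
      #(g u' ∩ g v') + (12 - G.degree w) * m ≤ 14 * m ∧
      (12 - G.degree w) * m + #(g u' ∩ g v' ∩ (G.neighborFinset w \ {u, v}).biUnion g) ≤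
        13 * m := by
  have hu'v' : u' ≠ v' := by
    rintro rfl
    rw [sdiff_self, bot_eq_empty, card_empty] at hkey
    have := Nat.mul_le_mul_right m (show 4 ≤ 8 - G.degree w by have := hdeg w; omega)
    omega
  obtain ⟨Su, hSu, Sv, hSv, hSuc, hSvc, hI, hIw⟩ :=
    exists_shrinking_pair hψ (hdeg w) huw hvw huu' hvv' hu'T hv'T hkey
  obtain ⟨g, hg, hgu', hgv', hPg⟩ := exists_shrinking_avoiding hψ hu'v' hSu hSuc hSv hSvc
  refine ⟨g, hg, card_biUnion_neighborFinset_sdiff_add_le hψ (hdeg w) huv huw hvw hg,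
    by rwa [hgu', hgv'], ?_⟩
  rw [hgu', hgv']
  set Nw := G.neighborFinset w \ {u, v}
  have hk12 : (12 - G.degree w) * m ≤ 12 * m := Nat.mul_le_mul_right m (Nat.sub_le 12 _)
  have hIF : #(Su ∩ Sv ∩ Nw.biUnion g) ≤ #(Su ∩ Sv) := card_le_card inter_subset_left
  by_cases hw : G.Adj u' w ∨ G.Adj v' w
  · have := hIw hw; omega
  have hZ : Nw \ {u', v'} = Nw := by
    refine sdiff_eq_self_of_disjoint (disjoint_left.mpr fun z hz hz' => hw ?_)
    have := (adj_and_notMem_of_mem_neighborFinset_sdiff hz).1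
    simp only [mem_insert, mem_singleton] at hz'
    rcases hz' with rfl | rfl
    exacts [Or.inl this, Or.inr this]
  rw [hZ] at hPg
  rcases Nw.eq_empty_or_nonempty with hNw | hNw
  · rw [hNw, biUnion_empty, inter_empty, card_empty]; omega
  · have := hPg hNw; omega

theorem exists_triangle_colours (hψ : HasSpareColours G u v w m ψ) (hdeg : ∀ z, G.degree z ≤ 4)
    (hm : 0 < m) (huv : G.Adj u v) (huw : G.Adj u w) (hvw : G.Adj v w) (huu' : G.Adj u u')
    (hvv' : G.Adj v v') (hu'T : u' ∉ ({u, v, w} : Set V)) (hv'T : v' ∉ ({u, v, w} : Set V))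
    (hkey : (8 - G.degree w) * m ≤ #(ψ u' \ ψ v')) [Fintype α] (hα : Fintype.card α = 31 * m) :
    ∃ (g : V → Finset α) (Sw Au Av : Finset α),
      (∀ y ∉ ({u, v, w} : Set V), g y ⊆ ψ y ∧ #(g y) = (12 - G.degree y) * m) ∧
      #Sw = (12 - G.degree w) * m ∧ #Au = 9 * m ∧ #Av = 9 * m ∧
      (∀ z ∈ G.neighborFinset w \ {u, v}, Disjoint Sw (g z)) ∧ Disjoint Au Av ∧
      Disjoint Au Sw ∧ Disjoint Av Sw ∧ Disjoint Au (g u') ∧ Disjoint Av (g v') := by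
  obtain ⟨g, hg, hF, hI, hIF⟩ := exists_shrinking hψ hdeg hm huv huw hvw huu' hvv' hu'T hv'T hkey
  have hk10 : (12 - G.degree w) * m ≤ 10 * m := Nat.mul_le_mul_right m <| by
    have := card_neighborFinset_sdiff_pair_add_two huw hvw huv.ne
    omega
  have hk8 : 8 * m ≤ (12 - G.degree w) * m := Nat.mul_le_mul_right m (by have := hdeg w; omega)
  have hu := hψ u' hu'T {u} (by simp [huu'.symm])
  have hv := hψ v' hv'T {v} (by simp [hvv'.symm])
  simp only [card_singleton, one_mul] at hu hv
  set F := (G.neighborFinset w \ {u, v}).biUnion g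
  obtain ⟨Sw, Au, Av, hSw, hAu, hAv, hSwF, hAuAv, hAuSw, hAvSw, hAuSu, hAvSv⟩ :=
    exists_triangle_colours_of_card_le (g u') (g v') F (k := (12 - G.degree w) * m)
      (a := 9 * m) (b := 9 * m) (by omega)
      (by have := card_le_card (sdiff_subset (s := g u' ∩ g v') (t := F)); omega)
      (by have := (hg u' hu'T).2; omega) (by have := (hg v' hv'T).2; omega) (by omega)
  exact ⟨g, Sw, Au, Av, hg, hSw, hAu, hAv,
    fun z hz => hSwF.mono_right (subset_biUnion_of_mem g hz), hAuAv, hAuSw, hAvSw, hAuSu, hAvSv⟩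

theorem pairwise_disjoint_update_triangle {β : Type*} [PartialOrder β] [OrderBot β]
    (huv : G.Adj u v) (huw : G.Adj u w) (hvw : G.Adj v w)
    (hu' : G.neighborFinset u = {v, w, u'}) (hv' : G.neighborFinset v = {u, w, v'})
    (hu'T : u' ∉ ({u, v, w} : Set V)) (hv'T : v' ∉ ({u, v, w} : Set V)) {g : V → β}
    (hg : ({u, v, w} : Set V)ᶜ.Pairwise fun y z => G.Adj y z → Disjoint (g y) (g z))
    {Sw Au Av : β} (hSw : ∀ z ∈ G.neighborFinset w \ {u, v}, Disjoint Sw (g z))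
    (hAuAv : Disjoint Au Av) (hAuSw : Disjoint Au Sw) (hAvSw : Disjoint Av Sw)
    (hAu : Disjoint Au (g u')) (hAv : Disjoint Av (g v')) (y z : V) (hyz : G.Adj y z) :
    Disjoint (update (update (update g w Sw) v Av) u Au y)
      (update (update (update g w Sw) v Av) u Au z) := by
  simp only [Set.mem_insert_iff, Set.mem_singleton_iff, not_or] at hu'T hv'T
  have hw := G.pairwise_disjoint_insert_update (x := w) (b := Sw) (by simp) hg <| by
    intro z hz hwz
    simp only [Set.mem_compl_iff, Set.mem_insert_iff, Set.mem_singleton_iff, not_or] at hz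
    exact hSw z (by simp [hwz, hz.1, hz.2.1])
  have hv := G.pairwise_disjoint_insert_update (x := v) (b := Av) (by simp [hvw.ne]) hw <| by
    intro z hz hvz
    have : z ∈ G.neighborFinset v := by simpa using hvz
    simp only [hv', mem_insert, mem_singleton] at this
    rcases this with rfl | rfl | rfl
    · simp [huw.ne] at hz
    · rwa [update_self]
    · rwa [update_of_ne hv'T.2.2]
  have hu := G.pairwise_disjoint_insert_update (x := u) (b := Au) (by simp [huw.ne, huv.ne]) hv <|
    by
    intro z _ huz
    have : z ∈ G.neighborFinset u := by simpa using huz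
    simp only [hu', mem_insert, mem_singleton] at this
    rcases this with rfl | rfl | rfl
    · rwa [update_self]
    · rwa [update_of_ne hvw.ne', update_self]
    · rwa [update_of_ne hu'T.2.1, update_of_ne hu'T.2.2]
  refine hu ?_ ?_ hyz.ne hyz <;>
    simp only [Set.mem_insert_iff, Set.mem_compl_iff, Set.mem_singleton_iff] <;> tauto

end Triangle

/-- Fact 2: extending a coloring of `G - {u,v,w}` over a triangle `uvw`
with `d(u) = d(v) = 3`, given `|ψ(u') \\ ψ(v')| ≥ (8 - d(w))M/31`. -/
theorem fact2_extension {V : Type*} [Fintype V] [DecidableEq V]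
    (G : SimpleGraph V) [DecidableRel G.Adj]
    (hdeg : ∀ z, G.degree z ≤ 4) (M : ℕ) (hM : 31 ∣ M)
    (u v w u' v' : V)
    (huv : G.Adj u v) (huw : G.Adj u w) (hvw : G.Adj v w)
    (hdu : G.degree u = 3) (hdv : G.degree v = 3)
    (hu' : G.neighborFinset u = {v, w, u'}) (hv' : G.neighborFinset v = {u, w, v'})
    (ψ : V → Finset (Fin M))
    (hdisj : ∀ y z, y ∉ ({u, v, w} : Set V) → z ∉ ({u, v, w} : Set V) →
      G.Adj y z → Disjoint (ψ y) (ψ z))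
    (hcard : ∀ y, y ∉ ({u, v, w} : Set V) →
      (12 - (G.neighborFinset y \ {u, v, w}).card) * M / 31 ≤ (ψ y).card)
    (hkey : (8 - G.degree w) * M / 31 ≤ (ψ u' \ ψ v').card) :
    ∃ ψ' : V → Finset (Fin M),
      (∀ y, y ∉ ({u, v, w} : Set V) →
        ψ' y ⊆ ψ y ∧ (ψ' y).card = (12 - G.degree y) * M / 31) ∧
      (ψ' u).card = 9 * M / 31 ∧ (ψ' v).card = 9 * M / 31 ∧
      (ψ' w).card = (12 - G.degree w) * M / 31 ∧
      (∀ y z, G.Adj y z → Disjoint (ψ' y) (ψ' z)) := by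
  obtain ⟨m, rfl⟩ := hM
  have hdiv (k : ℕ) : k * (31 * m) / 31 = k * m := by
    rw [mul_left_comm, Nat.mul_div_cancel_left _ (by norm_num)]
  simp only [hdiv] at hcard hkey ⊢
  rcases m.eq_zero_or_pos with rfl | hm
  · exact ⟨fun _ => ∅, by simp⟩
  have huu' : G.Adj u u' := by simp [← mem_neighborFinset, hu']
  have hvv' : G.Adj v v' := by simp [← mem_neighborFinset, hv']
  have hu'T := G.notMem_of_neighborFinset_eq_of_degree_eq_three hu' hdu
  have hv'T : v' ∉ ({u, v, w} : Set V) :=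
    Set.insert_comm v u {w} ▸ G.notMem_of_neighborFinset_eq_of_degree_eq_three hv' hdv
  obtain ⟨g, Sw, Au, Av, hg, hSw, hAu, hAv, hSwg, hAuAv, hAuSw, hAvSw, hAug, hAvg⟩ :=
    exists_triangle_colours (hasSpareColours_of_le_card (fun z => (hdeg z).trans (by norm_num))
      hcard) hdeg hm huv huw hvw huu' hvv' hu'T hv'T hkey (Fintype.card_fin _)
  refine ⟨update (update (update g w Sw) v Av) u Au, fun y hy => ?_, by rw [update_self, hAu],
    by rw [update_of_ne huv.ne', update_self, hAv],
    by rw [update_of_ne huw.ne', update_of_ne hvw.ne', update_self, hSw],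
    pairwise_disjoint_update_triangle huv huw hvw hu' hv' hu'T hv'T
      (fun y hy z hz _ hyz => (hdisj y z hy hz hyz).mono (hg y hy).1 (hg z hz).1)
      hSwg hAuAv hAuSw hAvSw hAug hAvg⟩
  have hy' := hy
  simp only [Set.mem_insert_iff, Set.mem_singleton_iff, not_or] at hy'
  rw [update_of_ne hy'.1, update_of_ne hy'.2.1, update_of_ne hy'.2.2]
  exact hg y hy
end
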